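/- arXiv:2311.17426 — 2 statements merged into one kernel-verified Lean document; each statement's English description precedes it below -/
import Mathlib

section
/- There exist a set Γ and a group G of permutations of Γ such that |G|_∞ > |F_{G,Γ}^N| for every N ∈ ℕ. In fact, one may take Γ = ω_ω (the ω-th infinite initial ordinal) and construct G so that |F_{G,Γ}^N| = ℵ_{N−1} for every N ∈ ℕ, while |G|_∞ = ℵ_ω. -/
/-! Let `A_k` have cardinality `ℵ_k`, put a fibre with `k + 1` points over each point of `A_k`,
and let `G` consist of the permutations that preserve every fibre. The orbits of `G` are exactly
the fibres, so the orbits with at most `M + 1` points are indexed by the disjoint union of the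
`A_k` with `k ≤ M`, a set of cardinality `ℵ_M`. Hence `|G|_∞ = sup_M ℵ_M = ℵ_ω`, which none of
the `|F_{G,Γ}^N|` attains. -/

open scoped Cardinal

noncomputable section

/-- The orbit of `γ` under a group `G` of permutations of `Γ`. -/
def orbitOf {Γ : Type*} (G : Subgroup (Equiv.Perm Γ)) (γ : Γ) : Set Γ :=
  {δ : Γ | ∃ g ∈ G, g γ = δ}

/-- The set of orbits of the action of `G` on `Γ`. -/
def orbitsOf {Γ : Type*} (G : Subgroup (Equiv.Perm Γ)) : Set (Set Γ) :=
  Set.range (orbitOf G)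

/-- `F_{G,Γ}^N` : the set of orbits of the action of `G` on `Γ` of cardinality at most `N`. -/
def FGN {Γ : Type*} (G : Subgroup (Equiv.Perm Γ)) (N : ℕ) : Set (Set Γ) :=
  {S ∈ orbitsOf G | Cardinal.mk S ≤ (N : Cardinal)}

/-- `|G|_∞` : the supremum of the (infinite) cardinalities of the families `F_{G,Γ}^N`,
`N ∈ ℕ`, whenever one of them is infinite, and `0` otherwise. -/
def GInftyCard {Γ : Type*} (G : Subgroup (Equiv.Perm Γ)) : Cardinal :=
  sSup {c : Cardinal | ∃ N : ℕ, c = Cardinal.mk (FGN G N) ∧ Cardinal.aleph0 ≤ c}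

universe u

open Cardinal Ordinal Set

namespace Cardinal

lemma sum_eq_iSup_of_countable {ι : Type u} [Countable ι] {f : ι → Cardinal.{u}}
    (hf : ℵ₀ ≤ ⨆ i, f i) : sum f = ⨆ i, f i := by
  refine (iSup_le_sum f).antisymm' ?_
  calc sum f ≤ #ι * ⨆ i, f i := sum_le_mk_mul_iSup f
    _ ≤ ℵ₀ * ⨆ i, f i := by gcongr; exact mk_le_aleph0
    _ = ⨆ i, f i := aleph0_mul_eq hf

lemma sum_aleph_eq_iSup {ι : Type u} [Countable ι] [Nonempty ι] (o : ι → Ordinal.{u}) :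
    sum (fun i => ℵ_ (o i)) = ⨆ i, ℵ_ (o i) :=
  sum_eq_iSup_of_countable <|
    (aleph0_le_aleph _).trans (le_ciSup bddAbove_of_small (Classical.arbitrary ι))

lemma aleph_omega0_eq_iSup_natCast : ℵ_ ω = ⨆ n : ℕ, ℵ_ (n : Ordinal) := by
  apply le_antisymm
  · rw [aleph_limit isSuccLimit_omega0]
    refine ciSup_le' fun a => ?_
    obtain ⟨n, hn⟩ := lt_omega0.mp a.2
    exact hn ▸ le_ciSup bddAbove_of_small n
  · exact ciSup_le' fun n => aleph_le_aleph.2 (natCast_lt_omega0 n).le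

end Cardinal

section Orbits

variable {Γ : Type*} (G : Subgroup (Equiv.Perm Γ))

lemma mem_orbitOf_self (γ : Γ) : γ ∈ orbitOf G γ :=
  ⟨1, G.one_mem, rfl⟩

lemma FGN_zero : FGN G 0 = ∅ := by
  refine eq_empty_of_forall_notMem ?_
  rintro _ ⟨⟨γ, rfl⟩, hcard⟩
  have : Nonempty (orbitOf G γ) := ⟨⟨γ, mem_orbitOf_self G γ⟩⟩
  simp only [Nat.cast_zero, nonpos_iff_eq_zero, mk_eq_zero_iff] at hcard
  exact not_isEmpty_of_nonempty _ hcard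

lemma FGN_mono : Monotone (FGN G) :=
  fun _ _ hNM _ hS => ⟨hS.1, hS.2.trans (by exact_mod_cast hNM)⟩

end Orbits

section FiberwisePerms

def fiberwisePerms {Γ B : Type*} (f : Γ → B) : Subgroup (Equiv.Perm Γ) where
  carrier := {g | ∀ x, f (g x) = f x}
  one_mem' _ := rfl
  mul_mem' hg hh x := (hg _).trans (hh x)
  inv_mem' {g} hg x := by simpa using (hg (g⁻¹ x)).symm

lemma apply_swap_apply_eq {Γ B : Type*} [DecidableEq Γ] {f : Γ → B} {x y : Γ}
    (hxy : f x = f y) (z : Γ) : f (Equiv.swap x y z) = f z := by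
  rw [Equiv.swap_apply_def]
  split_ifs with hx hy
  · rw [hx, hxy]
  · rw [hy, hxy]
  · rfl

lemma orbitOf_fiberwisePerms {Γ B : Type*} (f : Γ → B) (x : Γ) :
    orbitOf (fiberwisePerms f) x = f ⁻¹' {f x} := by
  classical
  ext y
  constructor
  · rintro ⟨g, hg, rfl⟩
    exact hg x
  · intro (hy : f y = f x)
    exact ⟨Equiv.swap x y, apply_swap_apply_eq hy.symm, Equiv.swap_apply_left x y⟩

lemma orbitsOf_fiberwisePerms {Γ B : Type*} {f : Γ → B} (hf : Function.Surjective f) :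
    orbitsOf (fiberwisePerms f) = range fun b => f ⁻¹' {b} := by
  simp only [orbitsOf, funext (orbitOf_fiberwisePerms f)]
  exact hf.range_comp fun b => f ⁻¹' {b}

variable {Γ B : Type u}

lemma mk_FGN_fiberwisePerms {f : Γ → B} (hf : Function.Surjective f) (N : ℕ) :
    #(FGN (fiberwisePerms f) N) = #{b | #(f ⁻¹' {b}) ≤ N} := by
  have hfib : Function.Injective fun b => f ⁻¹' {b} :=
    (preimage_injective.mpr hf).comp singleton_injective
  have hFGN : FGN (fiberwisePerms f) N = (fun b => f ⁻¹' {b}) '' {b | #(f ⁻¹' {b}) ≤ N} := by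
    ext S
    simp only [FGN, orbitsOf_fiberwisePerms hf, mem_ofPred_eq, mem_range, mem_image]
    constructor
    · rintro ⟨⟨b, rfl⟩, hb⟩
      exact ⟨b, hb, rfl⟩
    · rintro ⟨b, hb, rfl⟩
      exact ⟨⟨b, rfl⟩, hb⟩
  rw [hFGN, mk_image_eq hfib]

lemma mk_FGN_fiberwisePerms_sigmaFst {X : B → Type u} [∀ b, Nonempty (X b)] (N : ℕ) :
    #(FGN (fiberwisePerms (Sigma.fst : (Σ b, X b) → B)) N) = #{b | #(X b) ≤ N} := by
  have hf : Function.Surjective (Sigma.fst : (Σ b, X b) → B) :=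
    fun b => ⟨⟨b, Classical.arbitrary _⟩, rfl⟩
  have hfib (b : B) : #(range (Sigma.mk b : X b → Σ b, X b)) = #(X b) :=
    mk_range_eq _ sigma_mk_injective
  simp only [mk_FGN_fiberwisePerms hf, ← range_sigmaMk, hfib]

end FiberwisePerms

abbrev alephLayers : Type := Σ k : ℕ, (ℵ_ (k : Ordinal.{0})).ord.ToType

abbrev layeredSpace : Type := Σ b : alephLayers, Fin (b.1 + 1)

def layeredGroup : Subgroup (Equiv.Perm layeredSpace) := fiberwisePerms Sigma.fst

lemma mk_alephLayers : #alephLayers = ℵ_ ω := by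
  simp only [alephLayers, mk_sigma, mk_ord_toType]
  rw [sum_aleph_eq_iSup, aleph_omega0_eq_iSup_natCast]

lemma mk_layeredSpace : #layeredSpace = ℵ_ ω := by
  apply le_antisymm
  · calc #layeredSpace = sum fun b : alephLayers => #(Fin (b.1 + 1)) := mk_sigma _
      _ ≤ sum fun _ : alephLayers => ℵ₀ := sum_le_sum _ _ fun _ => (lt_aleph0_of_finite _).le
      _ = ℵ_ ω := by rw [sum_const', mk_alephLayers, mul_aleph0_eq (aleph0_le_aleph _)]
  · rw [← mk_alephLayers]
    exact mk_le_of_injective (f := fun b => (⟨b, 0⟩ : layeredSpace)) fun _ _ h => (Sigma.mk.inj h).1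

lemma mk_FGN_layeredGroup (M : ℕ) : #(FGN layeredGroup (M + 1)) = ℵ_ M := by
  rw [layeredGroup, mk_FGN_fiberwisePerms_sigmaFst]
  simp only [mk_fin, Nat.cast_le, Nat.add_le_add_iff_right]
  refine (mk_congr (Equiv.subtypeSigmaEquiv _ fun k : ℕ => k ≤ M)).trans ?_
  have : Nonempty {k // k ≤ M} := ⟨⟨M, le_rfl⟩⟩
  rw [mk_sigma]
  simp only [mk_ord_toType]
  rw [sum_aleph_eq_iSup fun k : {k // k ≤ M} => (k : Ordinal)]
  exact (ciSup_le' fun k => aleph_le_aleph.2 (by exact_mod_cast k.2)).antisymm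
    (le_ciSup_of_le bddAbove_of_small ⟨M, le_rfl⟩ le_rfl)

lemma GInftyCard_layeredGroup : GInftyCard layeredGroup = ℵ_ ω := by
  have hinf : {c | ∃ N : ℕ, c = #(FGN layeredGroup N) ∧ ℵ₀ ≤ c} = range fun M : ℕ => ℵ_ M := by
    ext c
    constructor
    · rintro ⟨_ | M, rfl, hc⟩
      · simp [FGN_zero, aleph0_ne_zero] at hc
      · exact ⟨M, (mk_FGN_layeredGroup M).symm⟩
    · rintro ⟨M, rfl⟩
      exact ⟨M + 1, (mk_FGN_layeredGroup M).symm, aleph0_le_aleph _⟩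
  rw [GInftyCard, hinf, aleph_omega0_eq_iSup_natCast]
  rfl

/-- There exist a set `Γ` and a group `G` of permutations of `Γ` such that
`|G|_∞ > |F_{G,Γ}^N|` for every `N ∈ ℕ`.  In fact one may take `Γ = ω_ω` and construct `G` so
that `|F_{G,Γ}^N| = ℵ_{N-1}` for every `N ≥ 1`, while `|G|_∞ = ℵ_ω`. -/
theorem exists_group_GInfty_gt_FGN :
    ∃ (Γ : Type) (G : Subgroup (Equiv.Perm Γ)),
      Cardinal.mk Γ = Cardinal.aleph Ordinal.omega0 ∧
      (∀ N : ℕ, 1 ≤ N → Cardinal.mk (FGN G N) = Cardinal.aleph (N - 1 : ℕ)) ∧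
      GInftyCard G = Cardinal.aleph Ordinal.omega0 ∧
      ∀ N : ℕ, Cardinal.mk (FGN G N) < GInftyCard G := by
  refine ⟨layeredSpace, layeredGroup, mk_layeredSpace, fun N hN => ?_,
    GInftyCard_layeredGroup, fun N => ?_⟩
  · obtain ⟨M, rfl⟩ := Nat.exists_eq_add_of_le' hN
    simpa using mk_FGN_layeredGroup M
  · rw [GInftyCard_layeredGroup]
    calc #(FGN layeredGroup N) ≤ #(FGN layeredGroup (N + 1)) :=
          mk_le_mk_of_subset (FGN_mono _ N.le_succ)
      _ = ℵ_ N := mk_FGN_layeredGroup N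
      _ < ℵ_ ω := aleph_lt_aleph.2 (natCast_lt_omega0 N)

end
end

section
/- Let w ∈ ℓ₂ \ ℓ₁ be a non-increasing sequence of positive numbers with w₁ < 1, and let G be a group of permutations of ℕ whose induced action on X(w) is compatible with the norm (each g acts as an isometry). If the orbit Orb_G(n₀) = {g(n₀) : g ∈ G} of some n₀ ∈ ℕ is finite, then w is constant on Orb_G(n₀), i.e. w_m = w_{n₀} for every m ∈ Orb_G(n₀). -/
open scoped Cardinal ENNReal NNReal

noncomputable section

universe u

/-- A bounded linear operator attains its norm. -/
def NormAttains {𝕜 : Type*} [RCLike 𝕜] {X Y : Type*} [SeminormedAddCommGroup X]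
    [SeminormedAddCommGroup Y] [NormedSpace 𝕜 X] [NormedSpace 𝕜 Y] (T : X →L[𝕜] Y) : Prop :=
  ∃ x : X, ‖x‖ = 1 ∧ ‖T x‖ = ‖T‖

/-- A set `M` in a topological vector space is `μ`-lineable if `M ∪ {0}` contains a vector
subspace of dimension `μ`. -/
def Lineable (𝕜 : Type*) {V : Type*} [NormedField 𝕜] [AddCommGroup V] [Module 𝕜 V]
    (M : Set V) (μ : Cardinal) : Prop :=
  ∃ W : Submodule 𝕜 V, Module.rank 𝕜 W = μ ∧ (W : Set V) ⊆ M ∪ {0}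

/-- A set `M` in a topological vector space is `μ`-spaceable if `M ∪ {0}` contains a closed
vector subspace of dimension `μ`. -/
def Spaceable (𝕜 : Type*) {V : Type*} [NormedField 𝕜] [AddCommGroup V] [Module 𝕜 V]
    [TopologicalSpace V] (M : Set V) (μ : Cardinal) : Prop :=
  ∃ W : Submodule 𝕜 V, IsClosed (W : Set V) ∧ Module.rank 𝕜 W = μ ∧ (W : Set V) ⊆ M ∪ {0}

/-- A set `M` in a topological vector space is `(α,β)`-spaceable if it is `α`-lineable and every
`α`-dimensional subspace of `M ∪ {0}` is contained in a closed `β`-dimensional subspace of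
`M ∪ {0}`. -/
def ABSpaceable (𝕜 : Type*) {V : Type*} [NormedField 𝕜] [AddCommGroup V] [Module 𝕜 V]
    [TopologicalSpace V] (M : Set V) (α β : Cardinal) : Prop :=
  Lineable 𝕜 M α ∧
    ∀ W : Submodule 𝕜 V, Module.rank 𝕜 W = α → (W : Set V) ⊆ M ∪ {0} →
      ∃ W' : Submodule 𝕜 V, IsClosed (W' : Set V) ∧ Module.rank 𝕜 W' = β ∧ W ≤ W' ∧
        (W' : Set V) ⊆ M ∪ {0}

/-- For a Banach space with a (symmetric) Schauder basis `e` on which a group `G` of permutations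
of `ℕ` acts by `g • e_n = e_{g n}`, the space `L_G` of `G`-invariant bounded linear operators:
by density of the span of the basis, `T` is `G`-invariant iff `T (e (g n)) = T (e n)` for all
`g ∈ G` and `n`. -/
def GInvariantOps {𝕜 : Type*} [RCLike 𝕜] {D E : Type*} [NormedAddCommGroup D] [NormedSpace 𝕜 D]
    [NormedAddCommGroup E] [NormedSpace 𝕜 E] (G : Subgroup (Equiv.Perm ℕ)) (e : ℕ → D) :
    Submodule 𝕜 (D →L[𝕜] E) where
  carrier := {T | ∀ g ∈ G, ∀ n : ℕ, T (e (g n)) = T (e n)}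
  add_mem' := by
    intro a b ha hb g hg n
    simp only [ContinuousLinearMap.add_apply, ha g hg n, hb g hg n]
  zero_mem' := by
    intro g hg n
    simp
  smul_mem' := by
    intro c a ha g hg n
    simp only [ContinuousLinearMap.smul_apply, ha g hg n]

/-- The norm of the canonical predual `d_*(w,1)` of the Lorentz sequence space `d(w,1)`,
evaluated on a finitely supported sequence of coefficients: the supremum over all finite sets
`S` of indices of the quotient of `∑_{i ∈ S} |a i|` by `∑_{i=1}^{|S|} w i`.  (The sum of the
`k` largest values of `(|a i|)` is the supremum of `∑_{i ∈ S} |a i|` over `S` with `|S| = k`.) -/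
def dStarNormFormula {𝕜 : Type*} [RCLike 𝕜] (w : ℕ → ℝ) (a : ℕ →₀ 𝕜) : ℝ :=
  ⨆ S : Finset ℕ, (∑ i ∈ S, ‖a i‖) / (∑ i ∈ Finset.range S.card, w i)

/-- The norm of the sequence space `Z` associated with Acosta's space `X(w)`:
`‖z‖ = ‖(1-w)z‖_∞ + ‖wz‖_1` (pointwise products). -/
def ZwNorm {𝕜 : Type*} [RCLike 𝕜] (w : ℕ → ℝ) (z : ℕ → 𝕜) : ℝ :=
  (⨆ n, (1 - w n) * ‖z n‖) + ∑' n, w n * ‖z n‖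

/-- The closed unit ball of the sequence space `Z` associated with `X(w)`. -/
def ZwBall (𝕜 : Type*) [RCLike 𝕜] (w : ℕ → ℝ) : Set (ℕ → 𝕜) :=
  {z | BddAbove (Set.range fun n => (1 - w n) * ‖z n‖) ∧
    Summable (fun n => w n * ‖z n‖) ∧ ZwNorm w z ≤ 1}

/-- The norm of Acosta's space `X(w)` (the closed linear span in `Z*` of the coordinate
functionals `eₙ`), evaluated on a finite linear combination `∑ₙ aₙ eₙ`: it is the dual norm
`sup { |∑ₙ aₙ zₙ| : ‖z‖_Z ≤ 1 }`. -/
def XwNormFormula {𝕜 : Type*} [RCLike 𝕜] (w : ℕ → ℝ) (a : ℕ →₀ 𝕜) : ℝ :=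
  ⨆ z : ZwBall 𝕜 w, ‖∑ n ∈ a.support, a n * z.1 n‖

/-!
For `0 ≤ w p, w q < 1`, `p ≠ q` and `w p ≤ c ≤ 1`, the norm of `c e_p + e_q` in `X(w)` is
`(c (1 - w q) + 1 - w p) / (1 - w p * w q)`: the estimate `(1 - w n) |z n| ≤ ‖(1-w)z‖_∞` at
`n = p, q` together with `w p |z p| + w q |z q| ≤ ‖wz‖_1` bounds `c |z p| + |z q|`, and equality
holds for `z` supported on `{p, q}` with `(1 - w p) z p = (1 - w q) z q`.
An isometry `g` therefore preserves this expression when `(p, q) = (n₀, g n₀)` is replaced by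
`(g n₀, g² n₀)`. At `c = 1` this forces `w n₀ = w (g² n₀)`; then for `c < 1` above `w n₀` and
`w (g n₀)` the expression is unchanged by swapping these two values, so they agree.
-/

def pairNorm (c u v : ℝ) : ℝ :=
  (c * (1 - v) + (1 - u)) / (1 - u * v)

theorem eq_of_pairNorm_one_eq {u v t : ℝ} (huv : u * v ≠ 1) (hvt : v * t ≠ 1) (hv : v ≠ 1)
    (h : pairNorm 1 u v = pairNorm 1 v t) : u = t := by
  rw [pairNorm, pairNorm, div_eq_div_iff (sub_ne_zero.2 huv.symm) (sub_ne_zero.2 hvt.symm)] at h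
  have hfac : (t - u) * (1 - v) ^ 2 = 0 := by linear_combination h
  rcases mul_eq_zero.1 hfac with h | h
  · linarith
  · exact absurd (sub_eq_zero.1 (pow_eq_zero_iff two_ne_zero |>.1 h)).symm hv

theorem eq_of_pairNorm_eq_swap {c u v : ℝ} (hc : c ≠ 1) (huv : u * v ≠ 1)
    (h : pairNorm c u v = pairNorm c v u) : u = v := by
  rw [pairNorm, pairNorm, mul_comm v u, div_left_inj' (sub_ne_zero.2 huv.symm)] at h
  have hfac : (1 - c) * (v - u) = 0 := by linear_combination h
  rcases mul_eq_zero.1 hfac with h | h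
  · exact absurd (sub_eq_zero.1 h).symm hc
  · linarith

section PairNorm

variable {𝕜 : Type*} [RCLike 𝕜] {w : ℕ → ℝ} {p q : ℕ} {c : ℝ}

theorem norm_le_pairNorm_of_mem_ZwBall (hw : ∀ n, 0 ≤ w n) (hpq : p ≠ q) (hp : w p < 1)
    (hq : w q < 1) (hcp : w p ≤ c) (hc : c ≤ 1) {z : ℕ → 𝕜} (hz : z ∈ ZwBall 𝕜 w) :
    ‖(c : 𝕜) * z p + z q‖ ≤ pairNorm c (w p) (w q) := by
  obtain ⟨hbdd, hsum, hZ⟩ := hz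
  set S := ⨆ n, (1 - w n) * ‖z n‖
  set T := ∑' n, w n * ‖z n‖
  have hSp : (1 - w p) * ‖z p‖ ≤ S := le_ciSup hbdd p
  have hSq : (1 - w q) * ‖z q‖ ≤ S := le_ciSup hbdd q
  have hT : w p * ‖z p‖ + w q * ‖z q‖ ≤ T := by
    simpa only [Finset.sum_pair hpq] using
      hsum.sum_le_tsum {p, q} (fun n _ => mul_nonneg (hw n) (norm_nonneg _))
  have hST : S + T ≤ 1 := hZ
  have hΔ : 0 < 1 - w p * w q := by nlinarith [hw p, hw q]
  have hc0 : 0 ≤ c := (hw p).trans hcp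
  calc ‖(c : 𝕜) * z p + z q‖ ≤ c * ‖z p‖ + ‖z q‖ := by
        simpa [norm_mul, abs_of_nonneg hc0] using norm_add_le ((c : 𝕜) * z p) (z q)
    _ ≤ pairNorm c (w p) (w q) := by
      rw [pairNorm, le_div_iff₀ hΔ]
      -- weights `c - w p`, `1 - c w q` on `S` and `c (1 - w q) + 1 - w p` on `T`
      nlinarith [mul_le_mul_of_nonneg_left hSp (sub_nonneg.2 hcp),
        mul_le_mul_of_nonneg_left hSq (by nlinarith [hw q] : 0 ≤ 1 - c * w q),
        mul_le_mul_of_nonneg_left (hT.trans (le_sub_iff_add_le'.2 hST))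
          (by nlinarith [hw q] : 0 ≤ c * (1 - w q) + (1 - w p))]

def pairWitness (w : ℕ → ℝ) (p q n : ℕ) : ℝ :=
  (if n = p then 1 - w q else if n = q then 1 - w p else 0) / (1 - w p * w q)

theorem pairWitness_mem_ZwBall (hw : ∀ n, 0 ≤ w n) (hpq : p ≠ q) (hp : w p < 1)
    (hq : w q < 1) : (fun n => (pairWitness w p q n : 𝕜)) ∈ ZwBall 𝕜 w := by
  have hΔ : 0 < 1 - w p * w q := by nlinarith [hw p, hw q]
  have hr : ∀ n, ‖(pairWitness w p q n : 𝕜)‖ = pairWitness w p q n := fun n => by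
    rw [RCLike.norm_ofReal, abs_of_nonneg]
    unfold pairWitness
    split_ifs <;> positivity
  simp only [ZwBall, ZwNorm, Set.mem_ofPred_eq, hr]
  have hsup : ∀ n, (1 - w n) * pairWitness w p q n ≤ (1 - w p) * (1 - w q) / (1 - w p * w q) := by
    intro n
    unfold pairWitness
    split_ifs with h₁ h₂
    · rw [h₁, mul_div_assoc]
    · rw [h₂, mul_div_assoc', mul_comm]
    · rw [zero_div, mul_zero]; positivity
  have hzero : ∀ n ∉ ({p, q} : Finset ℕ), w n * pairWitness w p q n = 0 := fun n hn => by
    simp only [Finset.mem_insert, Finset.mem_singleton, not_or] at hn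
    simp [pairWitness, hn.1, hn.2]
  refine ⟨⟨_, Set.forall_mem_range.2 hsup⟩, summable_of_ne_finset_zero hzero, ?_⟩
  rw [tsum_eq_sum hzero, Finset.sum_pair hpq]
  calc _ ≤ (1 - w p) * (1 - w q) / (1 - w p * w q)
        + (w p * pairWitness w p q p + w q * pairWitness w p q q) := by
        gcongr
        exact ciSup_le hsup
    _ = 1 := by
      simp only [pairWitness, ↓reduceIte, if_neg hpq.symm]
      field_simp
      ring

theorem norm_pairWitness (hw : ∀ n, 0 ≤ w n) (hpq : p ≠ q) (hp : w p < 1) (hq : w q < 1)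
    (hc : 0 ≤ c) :
    ‖(c : 𝕜) * (pairWitness w p q p : 𝕜) + (pairWitness w p q q : 𝕜)‖ =
      pairNorm c (w p) (w q) := by
  have hΔ : 0 < 1 - w p * w q := by nlinarith [hw p, hw q]
  simp only [pairWitness, ↓reduceIte, if_neg hpq.symm]
  rw [← RCLike.ofReal_mul, ← RCLike.ofReal_add, RCLike.norm_ofReal, abs_of_nonneg, pairNorm]
  · field_simp
  · have := sub_pos.2 hp
    have := sub_pos.2 hq
    positivity

theorem XwNormFormula_single_add_single (hw : ∀ n, 0 ≤ w n) (hpq : p ≠ q) (hp : w p < 1)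
    (hq : w q < 1) (hcp : w p ≤ c) (hc : c ≤ 1) :
    XwNormFormula w (Finsupp.single p (c : 𝕜) + Finsupp.single q 1) = pairNorm c (w p) (w q) := by
  have hsum : ∀ z : ℕ → 𝕜, ∑ n ∈ (Finsupp.single p (c : 𝕜) + Finsupp.single q 1).support,
      (Finsupp.single p (c : 𝕜) + Finsupp.single q 1 : ℕ →₀ 𝕜) n * z n = c * z p + z q := fun z => by
    simpa only [one_mul, Finsupp.sum] using
      Finsupp.sum_single_add_single p q (c : 𝕜) 1 (fun n x => x * z n) hpq fun _ => zero_mul _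
  simp only [XwNormFormula, hsum]
  have hub (z : ZwBall 𝕜 w) : ‖(c : 𝕜) * z.1 p + z.1 q‖ ≤ pairNorm c (w p) (w q) :=
    norm_le_pairNorm_of_mem_ZwBall hw hpq hp hq hcp hc z.2
  have hz₀ := pairWitness_mem_ZwBall (𝕜 := 𝕜) hw hpq hp hq
  have : Nonempty (ZwBall 𝕜 w) := ⟨⟨_, hz₀⟩⟩
  exact le_antisymm (ciSup_le hub) <| le_ciSup_of_le ⟨_, Set.forall_mem_range.2 hub⟩ ⟨_, hz₀⟩
    (norm_pairWitness hw hpq hp hq ((hw p).trans hcp)).ge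

theorem norm_smul_add_eq_pairNorm {X : Type*} [NormedAddCommGroup X] [NormedSpace 𝕜 X]
    {e : ℕ → X} (hnorm : ∀ a : ℕ →₀ 𝕜, ‖a.sum fun n v => v • e n‖ = XwNormFormula w a)
    (hw : ∀ n, 0 ≤ w n) (hpq : p ≠ q) (hp : w p < 1) (hq : w q < 1) (hcp : w p ≤ c)
    (hc : c ≤ 1) : ‖(c : 𝕜) • e p + e q‖ = pairNorm c (w p) (w q) := by
  rw [← XwNormFormula_single_add_single (𝕜 := 𝕜) hw hpq hp hq hcp hc, ← hnorm]
  simp only [Finsupp.sum_single_add_single _ _ _ _ _ hpq, zero_smul, one_smul, implies_true]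

end PairNorm

theorem w_constant_on_finite_orbit_general
    {𝕜 : Type u} [RCLike 𝕜]
    (w : ℕ → ℝ) (hw_pos : ∀ n, 0 < w n) (hw_anti : Antitone w) (hw_one : w 0 < 1)
    (G : Subgroup (Equiv.Perm ℕ))
    -- `X` is Acosta's space `X(w)`:
    {X : Type u} [NormedAddCommGroup X] [NormedSpace 𝕜 X]
    (e : ℕ → X)
    (hnorm : ∀ a : ℕ →₀ 𝕜, ‖a.sum fun n v => v • e n‖ = XwNormFormula w a)
    -- the action of `G` on `X(w)` is compatible with the norm (acts by isometries):
    (hiso : ∀ g ∈ G, ∀ a : ℕ →₀ 𝕜,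
      ‖a.sum fun n v => v • e (g n)‖ = ‖a.sum fun n v => v • e n‖)
    (n₀ : ℕ) :
    ∀ m ∈ orbitOf G n₀, w m = w n₀ := by
  rintro m ⟨g, hg, rfl⟩
  have hw0 (n : ℕ) : 0 ≤ w n := (hw_pos n).le
  have hw1 (n : ℕ) : w n < 1 := (hw_anti n.zero_le).trans_lt hw_one
  have hmul (m n : ℕ) : w m * w n ≠ 1 :=
    (mul_lt_one_of_nonneg_of_lt_one_left (hw0 m) (hw1 m) (hw1 n).le).ne
  have hinv {c : ℝ} {p q : ℕ} (hpq : p ≠ q) (hp : w p ≤ c) (hgp : w (g p) ≤ c) (hc : c ≤ 1) :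
      pairNorm c (w (g p)) (w (g q)) = pairNorm c (w p) (w q) := by
    have := hiso g hg (Finsupp.single p (c : 𝕜) + Finsupp.single q 1)
    simp only [Finsupp.sum_single_add_single _ _ _ _ _ hpq, zero_smul, one_smul,
      implies_true] at this
    rwa [norm_smul_add_eq_pairNorm hnorm hw0 (g.injective.ne hpq) (hw1 _) (hw1 _) hgp hc,
      norm_smul_add_eq_pairNorm hnorm hw0 hpq (hw1 _) (hw1 _) hp hc] at this
  by_cases hfix : g n₀ = n₀
  · rw [hfix]
  have h₁ : n₀ ≠ g n₀ := Ne.symm hfix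
  have hsq : w n₀ = w (g (g n₀)) := eq_of_pairNorm_one_eq (hmul _ _) (hmul _ _) (hw1 _).ne
    (hinv h₁ (hw1 _).le (hw1 _).le le_rfl).symm
  obtain ⟨c, hc, hc1⟩ := exists_between (max_lt (hw1 n₀) (hw1 (g n₀)))
  have hswap := hinv h₁ ((le_max_left _ _).trans hc.le) ((le_max_right _ _).trans hc.le) hc1.le
  rw [← hsq] at hswap
  exact eq_of_pairNorm_eq_swap hc1.ne (hmul _ _) hswap

/-- Let `w ∈ ℓ₂ \ ℓ₁` be a non-increasing sequence of positive numbers with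
`w₁ < 1`, and let `G` be a group of permutations of `ℕ` whose induced action on Acosta's space
`X(w)` is compatible with the norm (each `g` acts as an isometry).  If the orbit of some
`n₀ ∈ ℕ` under `G` is finite, then `w` is constant on that orbit. -/
theorem w_constant_on_finite_orbit
    {𝕜 : Type u} [RCLike 𝕜]
    (w : ℕ → ℝ) (hw_pos : ∀ n, 0 < w n) (hw_anti : Antitone w) (hw_one : w 0 < 1)
    (hw_l2 : Summable fun n => (w n) ^ 2) (hw_l1 : ¬ Summable w)
    (G : Subgroup (Equiv.Perm ℕ))
    -- `X` is Acosta's space `X(w)`: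
    {X : Type u} [NormedAddCommGroup X] [NormedSpace 𝕜 X] [CompleteSpace X]
    (e : ℕ → X)
    (hdense : Dense (Submodule.span 𝕜 (Set.range e) : Set X))
    (hnorm : ∀ a : ℕ →₀ 𝕜, ‖a.sum fun n v => v • e n‖ = XwNormFormula w a)
    -- the action of `G` on `X(w)` is compatible with the norm (acts by isometries):
    (hiso : ∀ g ∈ G, ∀ a : ℕ →₀ 𝕜,
      ‖a.sum fun n v => v • e (g n)‖ = ‖a.sum fun n v => v • e n‖)
    (n₀ : ℕ) (hfin : (orbitOf G n₀).Finite) :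
    ∀ m ∈ orbitOf G n₀, w m = w n₀ :=
  w_constant_on_finite_orbit_general w hw_pos hw_anti hw_one G e hnorm hiso n₀

end
end
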